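/- If G has an orthogonal representation in ℂ^c in which every vector has all entries of modulus 1, then G has a rank-1 quantum c-colouring; i.e., χ_q^(1)(G) ≤ ξ'(G). Explicitly, if x_v is the vector at vertex v and Δ_v the diagonal matrix with diagonal x_v, then the unitaries U_v = Δ_v F_c (F_c the discrete Fourier transform) form a quantum colouring: ⟨x_v, x_w⟩ = 0 implies all diagonal entries of (Δ_v F_c)†(Δ_w F_c) are zero. -/

import Mathlib

open Matrix

/-- The `c × c` discrete Fourier transform matrix, `(F_c)_{jk} = e^{2πijk/c}/√c`. -/
noncomputable def Fmat (c : ℕ) : Matrix (Fin c) (Fin c) ℂ :=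
  fun j k => Complex.exp (2 * Real.pi * Complex.I * (j : ℕ) * (k : ℕ) / c) / Real.sqrt c

/-- Rank-1 quantum chromatic number (unitary-matrix formulation). -/
noncomputable def qc1 {V : Type*} (G : SimpleGraph V) : ℕ :=
  sInf {c | ∃ U : V → Matrix.unitaryGroup (Fin c) ℂ,
    ∀ v w, G.Adj v w → ∀ α : Fin c,
      (((U v : Matrix (Fin c) (Fin c) ℂ))ᴴ * (U w : Matrix (Fin c) (Fin c) ℂ)) α α = 0}

/-- `ξ'(G)`: least `c` such that `G` has an orthogonal representation in `ℂ^c`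
with all entries of modulus one. -/
noncomputable def xi' {V : Type*} (G : SimpleGraph V) : ℕ :=
  sInf {c | ∃ x : V → Fin c → ℂ,
    (∀ v k, ‖x v k‖ = 1) ∧
    ∀ v w, G.Adj v w → ∑ k, (starRingEnd ℂ) (x v k) * x w k = 0}

/-!
Write `ζ = exp (2πi/c)`. The columns of `F_c` are orthonormal because `∑_{j<c} (ζ^d)^j` vanishes
whenever `c ∤ d`, so `Δ_v F_c` is unitary as soon as `Δ_v` is. Moreover every entry of `F_c` has
modulus `1/√c`, so the `α`-th diagonal entry of `(Δ_v F_c)ᴴ (Δ_w F_c) = F_cᴴ Δ_{x̄_v x_w} F_c`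
is `⟨x_v, x_w⟩ / c`, which vanishes on edges.
-/

open Complex

lemma star_Fmat_mul_Fmat (c : ℕ) (j α β : Fin c) :
    star (Fmat c j α) * Fmat c j β =
      (exp (2 * Real.pi * I / c) ^ ((β : ℤ) - α)) ^ (j : ℕ) / c := by
  have hc : ((Real.sqrt c : ℝ) : ℂ) * (Real.sqrt c : ℝ) = c := by
    rw [← ofReal_mul, Real.mul_self_sqrt (Nat.cast_nonneg c)]; norm_cast
  rw [← exp_int_mul, ← exp_nat_mul]
  simp only [Fmat, star_div₀, Complex.star_def, ← exp_conj, conj_ofReal]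
  rw [div_mul_div_comm, hc, ← exp_add]
  congr 2
  simp only [map_div₀, map_mul, conj_ofReal, conj_I, map_natCast, map_ofNat]
  push_cast
  ring

lemma geom_sum_eq_zero_of_pow_eq_one {R : Type*} [DivisionRing R] {ω : R} {n : ℕ}
    (hω : ω ^ n = 1) (hω1 : ω ≠ 1) : ∑ j ∈ Finset.range n, ω ^ j = 0 := by
  rw [geom_sum_eq hω1, hω, sub_self, zero_div]

lemma Fmat_conjTranspose_mul_self (c : ℕ) : (Fmat c)ᴴ * Fmat c = 1 := by
  ext α β
  have hc : c ≠ 0 := α.pos.ne'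
  have hζ := isPrimitiveRoot_exp c hc
  simp only [mul_apply, conjTranspose_apply, star_Fmat_mul_Fmat, ← Finset.sum_div,
    Fin.sum_univ_eq_sum_range (fun j => (exp (2 * Real.pi * I / c) ^ ((β : ℤ) - α)) ^ j)]
  obtain rfl | hαβ := eq_or_ne α β
  · simp [hc]
  · rw [geom_sum_eq_zero_of_pow_eq_one, zero_div, one_apply_ne hαβ]
    · rw [← zpow_natCast, ← _root_.zpow_mul, hζ.zpow_eq_one_iff_dvd]
      exact dvd_mul_left _ _
    · rw [Ne, hζ.zpow_eq_one_iff_dvd]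
      intro hdvd
      have := Int.eq_zero_of_abs_lt_dvd hdvd (by rw [abs_lt]; omega)
      exact hαβ (by omega)

lemma conjTranspose_diagonal_mul_mul_diagonal_mul {n R : Type*} [Fintype n] [DecidableEq n]
    [CommRing R] [StarRing R] (x y : n → R) (F : Matrix n n R) :
    (diagonal x * F)ᴴ * (diagonal y * F) = Fᴴ * diagonal (star x * y) * F := by
  simp only [conjTranspose_mul, diagonal_conjTranspose, Matrix.mul_assoc,
    ← Matrix.mul_assoc _ (diagonal y), diagonal_mul_diagonal]
  rfl

lemma Fmat_conjTranspose_mul_diagonal_mul_apply_self (c : ℕ) (z : Fin c → ℂ) (α : Fin c) :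
    ((Fmat c)ᴴ * diagonal z * Fmat c) α α = (∑ k, z k) / c := by
  simp only [mul_apply, conjTranspose_apply, diagonal_apply, mul_ite, mul_zero,
    Finset.sum_ite_eq', Finset.mem_univ, if_true, Finset.sum_div]
  refine Finset.sum_congr rfl fun k _ => ?_
  rw [mul_right_comm, star_Fmat_mul_Fmat]
  simp [div_eq_inv_mul, mul_comm]

lemma diagonal_mul_Fmat_mem_unitaryGroup {c : ℕ} {x : Fin c → ℂ} (hx : ∀ k, ‖x k‖ = 1) :
    diagonal x * Fmat c ∈ unitaryGroup (Fin c) ℂ := by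
  have hxx : star x * x = 1 := funext fun k => by
    simp [← Complex.normSq_eq_conj_mul_self, Complex.normSq_eq_norm_sq, hx]
  rw [mem_unitaryGroup_iff', star_eq_conjTranspose, conjTranspose_diagonal_mul_mul_diagonal_mul,
    hxx, Pi.one_def, diagonal_one, Matrix.mul_one, Fmat_conjTranspose_mul_self]

lemma diagonal_mul_Fmat_conjTranspose_mul_apply_self_eq_zero {c : ℕ} {x y : Fin c → ℂ}
    (hxy : ∑ k, starRingEnd ℂ (x k) * y k = 0) (α : Fin c) :
    ((diagonal x * Fmat c)ᴴ * (diagonal y * Fmat c)) α α = 0 := by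
  rw [conjTranspose_diagonal_mul_mul_diagonal_mul, Fmat_conjTranspose_mul_diagonal_mul_apply_self]
  simp only [Pi.mul_apply, Pi.star_apply, Complex.star_def, hxy, zero_div]

lemma qc1_le_of_orthogonalRepresentation {V : Type*} (G : SimpleGraph V) {c : ℕ}
    {x : V → Fin c → ℂ} (hx : ∀ v k, ‖x v k‖ = 1)
    (horth : ∀ v w, G.Adj v w → ∑ k, starRingEnd ℂ (x v k) * x w k = 0) : qc1 G ≤ c :=
  Nat.sInf_le ⟨fun v => ⟨_, diagonal_mul_Fmat_mem_unitaryGroup (hx v)⟩,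
    fun v w hvw => diagonal_mul_Fmat_conjTranspose_mul_apply_self_eq_zero (horth v w hvw)⟩

lemma exists_orthogonalRepresentation_xi' {V : Type*} (G : SimpleGraph V) :
    ∃ x : V → Fin (xi' G) → ℂ, (∀ v k, ‖x v k‖ = 1) ∧
      ∀ v w, G.Adj v w → ∑ k, starRingEnd ℂ (x v k) * x w k = 0 :=
  Nat.sInf_mem (s := {c | ∃ x : V → Fin c → ℂ, (∀ v k, ‖x v k‖ = 1) ∧
      ∀ v w, G.Adj v w → ∑ k, starRingEnd ℂ (x v k) * x w k = 0})
    ⟨0, fun _ => Fin.elim0, fun _ k => k.elim0, fun _ _ _ => by simp⟩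

/-- An orthogonal representation with unit-modulus entries yields a rank-1 quantum
colouring via `U_v = Δ_v F_c`; hence `χ_q^(1)(G) ≤ ξ'(G)`. -/
theorem stmt4 {V : Type*} (G : SimpleGraph V) :
    (∀ (c : ℕ) (x : V → Fin c → ℂ),
      (∀ v k, ‖x v k‖ = 1) →
      (∀ v w, G.Adj v w → ∑ k, (starRingEnd ℂ) (x v k) * x w k = 0) →
      (∀ v, (Matrix.diagonal (x v) * Fmat c) ∈ Matrix.unitaryGroup (Fin c) ℂ) ∧
      ∀ v w, G.Adj v w → ∀ α : Fin c,
        ((Matrix.diagonal (x v) * Fmat c)ᴴ * (Matrix.diagonal (x w) * Fmat c)) α α = 0) ∧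
    qc1 G ≤ xi' G := by
  refine ⟨fun c x hx horth => ⟨fun v => diagonal_mul_Fmat_mem_unitaryGroup (hx v),
    fun v w hvw => diagonal_mul_Fmat_conjTranspose_mul_apply_self_eq_zero (horth v w hvw)⟩, ?_⟩
  obtain ⟨x, hx, horth⟩ := exists_orthogonalRepresentation_xi' G
  exact qc1_le_of_orthogonalRepresentation G hx horth
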